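/- Randomized Kaczmarz for ridge regression (coordinate descent on the dual) with n > m converges linearly: E‖α_t − α°‖²_{XX*+λI} ≤ (1 − (σ_1² + λ)/(Σ_i σ_i² + mλ))^t ‖α_0 − α°‖²_{XX*+λI}, where σ_1 is the smallest singular value of X. -/

import Mathlib

/-!
Write `A = XXᵀ + λI` and `e = α - α°`. Updating coordinate `i` replaces `e` by
`e - ((Ae)ᵢ / Aᵢᵢ) eᵢ`, the exact minimizer of `eᵀAe` along `eᵢ`, which lowers `eᵀAe` by
`(Ae)ᵢ² / Aᵢᵢ`. Drawing `i` with probability `Aᵢᵢ / tr A` therefore lowers it in expectation by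
`‖Ae‖² / tr A`, and `‖Ae‖² ≥ (σ₁² + λ) eᵀAe` because `A ≥ (σ₁² + λ) I`. Since the rows are drawn
independently, this one-step contraction by `1 - (σ₁² + λ) / tr A` iterates.
-/

open Matrix

/-- One step of randomized Kaczmarz (dual coordinate descent) for ridge regression:
update coordinate i of the dual variable α. -/
noncomputable def rkUpdate {m n : ℕ} (X : Matrix (Fin m) (Fin n) ℝ) (y : Fin m → ℝ)
    (lam : ℝ) (i : Fin m) (α : Fin m → ℝ) : Fin m → ℝ :=
  Function.update α i
    (α i + (y i - ((X * Xᵀ).mulVec α) i - lam * α i) / ((∑ j, (X i j) ^ 2) + lam))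

/-- Iterate RK along a given sequence of row choices. -/
noncomputable def rkIter {m n : ℕ} (X : Matrix (Fin m) (Fin n) ℝ) (y : Fin m → ℝ)
    (lam : ℝ) : List (Fin m) → (Fin m → ℝ) → Fin m → ℝ
  | [], α => α
  | i :: is, α => rkIter X y lam is (rkUpdate X y lam i α)

namespace Matrix

variable {ι : Type*} [DecidableEq ι]

open scoped MatrixOrder in
theorem posSemidef_sub_smul_one_of_le_spectrum [Fintype ι] {M : Matrix ι ι ℝ}
    (hM : M.IsHermitian) {r : ℝ} (h : ∀ x ∈ spectrum ℝ M, r ≤ x) :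
    (M - r • 1).PosSemidef := by
  have hle := (algebraMap_le_iff_le_spectrum (r := r) (a := M) hM).2 h
  rwa [le_iff, Algebra.algebraMap_eq_smul_one] at hle

section LowerBound

variable {A : Matrix ι ι ℝ} {c : ℝ}

theorem le_diag_of_posSemidef_sub_smul_one (hA : (A - c • 1).PosSemidef) (i : ι) :
    c ≤ A i i := by
  simpa using hA.diag_nonneg (i := i)

variable [Fintype ι]

theorem div_trace_le_one_of_posSemidef_sub_smul_one (hc : 0 ≤ c)
    (hA : (A - c • 1).PosSemidef) : c / A.trace ≤ 1 := by
  rcases isEmpty_or_nonempty ι with hι | ⟨⟨i⟩⟩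
  · simp [trace]
  have hdiag : ∀ j, 0 ≤ A j j := fun j => hc.trans (le_diag_of_posSemidef_sub_smul_one hA j)
  refine div_le_one_of_le₀ ?_ (Finset.sum_nonneg fun j _ => hdiag j)
  calc c ≤ A i i := le_diag_of_posSemidef_sub_smul_one hA i
    _ ≤ A.trace := Finset.single_le_sum (fun j _ => hdiag j) (Finset.mem_univ i)

theorem mul_dotProduct_mulVec_le_of_posSemidef_sub_smul_one (hc : 0 ≤ c)
    (hA : (A - c • 1).PosSemidef) (e : ι → ℝ) :
    c * (e ⬝ᵥ A *ᵥ e) ≤ A *ᵥ e ⬝ᵥ A *ᵥ e := by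
  have hlow : c * (e ⬝ᵥ e) ≤ e ⬝ᵥ A *ᵥ e := by
    simpa [sub_mulVec, smul_mulVec, dotProduct_sub, sub_nonneg] using
      hA.dotProduct_mulVec_nonneg e
  -- `‖Ae - ce‖² ≥ 0` gives `‖Ae‖² ≥ 2c eᵀAe - c²‖e‖²`, and `c‖e‖² ≤ eᵀAe`.
  have hsq : 0 ≤ (A *ᵥ e - c • e) ⬝ᵥ (A *ᵥ e - c • e) :=
    Finset.sum_nonneg fun j _ => mul_self_nonneg _
  simp only [dotProduct_sub, sub_dotProduct, dotProduct_smul, smul_dotProduct, smul_eq_mul,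
    dotProduct_comm (A *ᵥ e) e] at hsq
  nlinarith [mul_le_mul_of_nonneg_left hlow hc]

end LowerBound

section CoordStep

variable [Fintype ι] (A : Matrix ι ι ℝ)

/-- Exact minimization of `e ↦ eᵀ A e` along the `i`-th coordinate. When `e = α - α°` is the
error of an iterate for `A α° = b`, this is the error after one coordinate-descent step on `α`. -/
noncomputable def coordStep (i : ι) (e : ι → ℝ) : ι → ℝ :=
  e - ((A *ᵥ e) i / A i i) • Pi.single i 1

variable {A}

theorem dotProduct_mulVec_coordStep (hA : A.IsSymm) {i : ι} (hAii : A i i ≠ 0) (e : ι → ℝ) :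
    coordStep A i e ⬝ᵥ A *ᵥ coordStep A i e = e ⬝ᵥ A *ᵥ e - (A *ᵥ e) i ^ 2 / A i i := by
  have hsymm : ∀ w, e ⬝ᵥ A *ᵥ w = A *ᵥ e ⬝ᵥ w := fun w => by
    rw [dotProduct_mulVec, ← vecMul_transpose, hA.eq]
  simp only [coordStep, mulVec_sub, mulVec_smul, dotProduct_sub, sub_dotProduct,
    dotProduct_smul, smul_dotProduct, hsymm]
  simp only [mulVec_single, single_dotProduct, dotProduct_single, smul_eq_mul, one_mul,
    mul_one, MulOpposite.op_one, one_smul, col_apply]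
  field_simp
  ring

theorem sum_diag_div_trace_mul_coordStep_le {c : ℝ} (hA : A.IsSymm) (hc : 0 < c)
    (hAc : (A - c • 1).PosSemidef) (e : ι → ℝ) :
    ∑ i, A i i / A.trace * (coordStep A i e ⬝ᵥ A *ᵥ coordStep A i e) ≤
      (1 - c / A.trace) * (e ⬝ᵥ A *ᵥ e) := by
  rcases isEmpty_or_nonempty ι with hι | hι
  · simp [dotProduct]
  have hdiag : ∀ i, 0 < A i i := fun i => hc.trans_le (le_diag_of_posSemidef_sub_smul_one hAc i)
  have htrace : 0 < A.trace := Finset.sum_pos (fun i _ => hdiag i) Finset.univ_nonempty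
  calc ∑ i, A i i / A.trace * (coordStep A i e ⬝ᵥ A *ᵥ coordStep A i e)
      = ∑ i, (A i i / A.trace * (e ⬝ᵥ A *ᵥ e) - (A *ᵥ e) i ^ 2 / A.trace) := by
        refine Finset.sum_congr rfl fun i _ => ?_
        have hAii := (hdiag i).ne'
        rw [dotProduct_mulVec_coordStep hA hAii]
        field_simp
    _ = e ⬝ᵥ A *ᵥ e - (A *ᵥ e ⬝ᵥ A *ᵥ e) / A.trace := by
        have htr : ∑ i, A i i = A.trace := rfl
        rw [Finset.sum_sub_distrib, ← Finset.sum_mul, ← Finset.sum_div, ← Finset.sum_div,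
          htr, div_self htrace.ne', one_mul]
        simp only [dotProduct, sq]
    _ ≤ e ⬝ᵥ A *ᵥ e - c * (e ⬝ᵥ A *ᵥ e) / A.trace := by
        gcongr
        exact mul_dotProduct_mulVec_le_of_posSemidef_sub_smul_one hc.le hAc e
    _ = (1 - c / A.trace) * (e ⬝ᵥ A *ᵥ e) := by ring

end CoordStep

end Matrix

/-- The left side is the expectation of `V` after `t` steps `a ↦ f i a`, with the indices `i`
drawn independently with weights `p`. -/
theorem sum_prod_mul_foldl_le_pow {ι α : Type*} [Fintype ι] {p : ι → ℝ} (hp : ∀ i, 0 ≤ p i)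
    {f : ι → α → α} {V : α → ℝ} {ρ : ℝ} (hρ : 0 ≤ ρ)
    (hstep : ∀ a, ∑ i, p i * V (f i a) ≤ ρ * V a) (t : ℕ) (a : α) :
    ∑ is : Fin t → ι, (∏ s, p (is s)) * V ((List.ofFn is).foldl (fun b i => f i b) a) ≤
      ρ ^ t * V a := by
  induction t generalizing a with
  | zero => simp
  | succ t ih =>
    rw [← (Fin.consEquiv fun _ => ι).sum_comp, Fintype.sum_prod_type]
    calc _ = ∑ i, p i * ∑ is : Fin t → ι,
            (∏ s, p (is s)) * V ((List.ofFn is).foldl (fun b i => f i b) (f i a)) := by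
          simp [Fin.consEquiv, Fin.prod_univ_succ, List.ofFn_succ, Finset.mul_sum, mul_assoc]
      _ ≤ ∑ i, p i * (ρ ^ t * V (f i a)) := by
          gcongr with i
          · exact hp i
          · exact ih _
      _ = ρ ^ t * ∑ i, p i * V (f i a) := by
          rw [Finset.mul_sum]
          exact Finset.sum_congr rfl fun i _ => by ring
      _ ≤ ρ ^ t * (ρ * V a) := by gcongr; exact hstep a
      _ = ρ ^ (t + 1) * V a := by ring

section RidgeKaczmarz

variable {m n : ℕ} (X : Matrix (Fin m) (Fin n) ℝ) (y : Fin m → ℝ) (lam : ℝ)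

theorem rkIter_eq_foldl (l : List (Fin m)) (α : Fin m → ℝ) :
    rkIter X y lam l α = l.foldl (fun β i => rkUpdate X y lam i β) α := by
  induction l generalizing α with
  | nil => rfl
  | cons i l ih => exact ih _

theorem diag_mul_transpose_add_smul_one (i : Fin m) :
    (X * Xᵀ + lam • (1 : Matrix (Fin m) (Fin m) ℝ)) i i = ∑ j, X i j ^ 2 + lam := by
  simp [mul_apply, sq]

theorem trace_mul_transpose_add_smul_one :
    (X * Xᵀ + lam • (1 : Matrix (Fin m) (Fin m) ℝ)).trace = ∑ i, ∑ j, X i j ^ 2 + m * lam := by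
  simp only [trace, diag_apply, diag_mul_transpose_add_smul_one, Finset.sum_add_distrib]
  simp

theorem rkUpdate_sub_eq_coordStep {αo : Fin m → ℝ} (hαo : (X * Xᵀ + lam • 1) *ᵥ αo = y)
    (i : Fin m) (α : Fin m → ℝ) :
    rkUpdate X y lam i α - αo = coordStep (X * Xᵀ + lam • 1) i (α - αo) := by
  have hres : ((X * Xᵀ + lam • 1) *ᵥ (α - αo)) i = ((X * Xᵀ) *ᵥ α) i + lam * α i - y i := by
    simp [mulVec_sub, ← hαo, add_mulVec, smul_mulVec]
  ext j
  rcases eq_or_ne j i with rfl | hj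
  · simp only [rkUpdate, coordStep, Pi.sub_apply, Pi.smul_apply, Function.update_self,
      Pi.single_eq_same, smul_eq_mul, mul_one, hres, diag_mul_transpose_add_smul_one]
    field_simp
    ring
  · simp [rkUpdate, coordStep, Function.update_of_ne hj, Pi.single_eq_of_ne hj]

end RidgeKaczmarz

theorem rk_ridge_linear_convergence_general {m n : ℕ}
    (X : Matrix (Fin m) (Fin n) ℝ) (y : Fin m → ℝ) (lam : ℝ) (hlam : 0 < lam)
    (σ1 : ℝ) (hσ : IsLeast (spectrum ℝ (X * Xᵀ)) (σ1 ^ 2))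
    (αo : Fin m → ℝ)
    (hαo : (X * Xᵀ + lam • (1 : Matrix (Fin m) (Fin m) ℝ)).mulVec αo = y)
    (α0 : Fin m → ℝ) (t : ℕ) :
    ∑ is : Fin t → Fin m,
        (∏ s, (((∑ j, (X (is s) j) ^ 2) + lam) / ((∑ i, ∑ j, (X i j) ^ 2) + m * lam))) *
          ((rkIter X y lam (List.ofFn is) α0 - αo) ⬝ᵥ
            (X * Xᵀ + lam • (1 : Matrix (Fin m) (Fin m) ℝ)).mulVec
              (rkIter X y lam (List.ofFn is) α0 - αo)) ≤
      (1 - (σ1 ^ 2 + lam) / ((∑ i, ∑ j, (X i j) ^ 2) + m * lam)) ^ t *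
        ((α0 - αo) ⬝ᵥ
          (X * Xᵀ + lam • (1 : Matrix (Fin m) (Fin m) ℝ)).mulVec (α0 - αo)) := by
  have hA : (X * Xᵀ + lam • (1 : Matrix (Fin m) (Fin m) ℝ)).IsSymm := by
    simp [IsSymm, transpose_mul]
  have hc : 0 < σ1 ^ 2 + lam := by positivity
  have hAc : (X * Xᵀ + lam • 1 - (σ1 ^ 2 + lam) • 1 : Matrix (Fin m) (Fin m) ℝ).PosSemidef := by
    have hXX : (X * Xᵀ).IsHermitian := by simpa using isHermitian_mul_conjTranspose_self X
    convert posSemidef_sub_smul_one_of_le_spectrum hXX hσ.2 using 1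
    rw [add_smul]
    abel
  rw [← trace_mul_transpose_add_smul_one]
  simp only [← diag_mul_transpose_add_smul_one X lam, rkIter_eq_foldl]
  refine sum_prod_mul_foldl_le_pow (f := rkUpdate X y lam)
    (p := fun i => (X * Xᵀ + lam • 1 : Matrix (Fin m) (Fin m) ℝ) i i / (X * Xᵀ + lam • 1).trace)
    (V := fun α => (α - αo) ⬝ᵥ (X * Xᵀ + lam • 1) *ᵥ (α - αo)) (fun i => ?_)
    (sub_nonneg.2 (div_trace_le_one_of_posSemidef_sub_smul_one hc.le hAc)) (fun α => ?_) t α0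
  · simp only [diag_mul_transpose_add_smul_one, trace_mul_transpose_add_smul_one]
    positivity
  · simpa only [rkUpdate_sub_eq_coordStep X y lam hαo] using
      sum_diag_div_trace_mul_coordStep_le hA hc hAc (α - αo)

/-- Randomized Kaczmarz for ridge regression with n > m converges linearly:
E‖α_t − α°‖²_{XXᵀ+λI} ≤ (1 − (σ₁² + λ)/(Σᵢ σᵢ² + mλ))ᵗ ‖α₀ − α°‖²_{XXᵀ+λI},
where rows are chosen with probability (‖Xⁱ‖² + λ)/(‖X‖_F² + mλ) and σ₁ is the
smallest singular value of X (Σᵢ σᵢ² = ‖X‖_F²). -/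
theorem rk_ridge_linear_convergence {m n : ℕ} (hmn : m < n)
    (X : Matrix (Fin m) (Fin n) ℝ) (y : Fin m → ℝ) (lam : ℝ) (hlam : 0 < lam)
    (σ1 : ℝ) (hσ1 : 0 ≤ σ1) (hσ : IsLeast (spectrum ℝ (X * Xᵀ)) (σ1 ^ 2))
    (αo : Fin m → ℝ)
    (hαo : (X * Xᵀ + lam • (1 : Matrix (Fin m) (Fin m) ℝ)).mulVec αo = y)
    (α0 : Fin m → ℝ) (t : ℕ) :
    ∑ is : Fin t → Fin m,
        (∏ s, (((∑ j, (X (is s) j) ^ 2) + lam) / ((∑ i, ∑ j, (X i j) ^ 2) + m * lam))) *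
          ((rkIter X y lam (List.ofFn is) α0 - αo) ⬝ᵥ
            (X * Xᵀ + lam • (1 : Matrix (Fin m) (Fin m) ℝ)).mulVec
              (rkIter X y lam (List.ofFn is) α0 - αo)) ≤
      (1 - (σ1 ^ 2 + lam) / ((∑ i, ∑ j, (X i j) ^ 2) + m * lam)) ^ t *
        ((α0 - αo) ⬝ᵥ
          (X * Xᵀ + lam • (1 : Matrix (Fin m) (Fin m) ℝ)).mulVec (α0 - αo)) :=
  rk_ridge_linear_convergence_general X y lam hlam σ1 hσ αo hαo α0 t
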